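/- For n ≥ 3 and 1 ≤ k < n/2, set γ = 2(n−k)/(n−2k) and write points of ℝⁿ as (x,y), x ∈ ℝ^{n−k}, y ∈ ℝᵏ, with r = |x|, t = |y|. The function w defined (up to the normalizing constant (γ/2)^{1−k/n}(γ−1)^{1/n}) by w = (r^γ + r^{−γ}t²)/2 when t ≤ r^γ and w = t when t > r^γ is convex on ℝⁿ, and satisfies w(x,y) ≥ c(n,k)|y| for some constant c(n,k) > 0. -/

import Mathlib

/-!
With `C` the normalizing constant and `s = r ^ γ`, `C * w` is
`φ(s, t) = sup_{a ∈ [0, 1]} (a t + (1 - a²) s / 2)`, attained at `a = min (1, t / s)`.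
Each function `(x, y) ↦ a |y| + (1 - a²) |x| ^ γ / 2` is convex because `γ ≥ 1`,
so `w` is convex as a pointwise maximum of convex functions; the choice `a = 1` gives `C * w ≥ |y|`.
-/

open Set

section AttainedSup

variable {𝕜 E β ι : Type*} [Semiring 𝕜] [PartialOrder 𝕜] [AddCommMonoid E] [SMul 𝕜 E]
  [AddCommMonoid β] [PartialOrder β] [IsOrderedAddMonoid β] [Module 𝕜 β] [PosSMulMono 𝕜 β]

theorem ConvexOn.of_le_of_exists_eq {s : Set E} {f : E → β} {g : ι → E → β} (hs : Convex 𝕜 s)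
    (hg : ∀ i, ConvexOn 𝕜 s (g i)) (hle : ∀ i, ∀ x ∈ s, g i x ≤ f x)
    (hex : ∀ x ∈ s, ∃ i, f x = g i x) : ConvexOn 𝕜 s f := by
  refine ⟨hs, fun x hx y hy a b ha hb hab => ?_⟩
  obtain ⟨i, hi⟩ := hex _ (hs hx hy ha hb hab)
  calc f (a • x + b • y) = g i (a • x + b • y) := hi
    _ ≤ a • g i x + b • g i y := (hg i).2 hx hy ha hb hab
    _ ≤ a • f x + b • f y := by gcongr <;> exact hle i _ ‹_›

end AttainedSup

theorem convexOn_univ_norm_rpow {E : Type*} [NormedAddCommGroup E] [NormedSpace ℝ E]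
    {p : ℝ} (hp : 1 ≤ p) : ConvexOn ℝ univ (fun x : E => ‖x‖ ^ p) := by
  refine ⟨convex_univ, fun x _ y _ a b ha hb hab => ?_⟩
  calc ‖a • x + b • y‖ ^ p ≤ (a * ‖x‖ + b * ‖y‖) ^ p := by
        gcongr
        simpa [norm_smul, abs_of_nonneg ha, abs_of_nonneg hb] using norm_add_le (a • x) (b • y)
    _ ≤ a • ‖x‖ ^ p + b • ‖y‖ ^ p :=
        (convexOn_rpow hp).2 (norm_nonneg x) (norm_nonneg y) ha hb hab

/-- The profile of `C * w` in the variables `s = |x| ^ γ` and `t = |y|`; for `s = 0` only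
`t ≤ 0` takes the first branch, where the junk value `0⁻¹ = 0` is harmless. -/
noncomputable def wProfile (s t : ℝ) : ℝ :=
  if t ≤ s then (s + s⁻¹ * t ^ 2) / 2 else t

section Profile

variable {s t : ℝ}

theorem affine_le_wProfile (hs : 0 ≤ s) {a : ℝ} (ha₀ : 0 ≤ a) (ha₁ : a ≤ 1) :
    a * t + (1 - a ^ 2) / 2 * s ≤ wProfile s t := by
  unfold wProfile
  split_ifs with hts
  · rcases hs.eq_or_lt with rfl | hs
    · simp only [inv_zero, zero_mul, add_zero, mul_zero, zero_div]
      exact mul_nonpos_of_nonneg_of_nonpos ha₀ hts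
    · calc a * t + (1 - a ^ 2) / 2 * s
          = (s + s⁻¹ * t ^ 2) / 2 - (t - a * s) ^ 2 / (2 * s) := by field_simp; ring
        _ ≤ (s + s⁻¹ * t ^ 2) / 2 := sub_le_self _ (by positivity)
  · nlinarith [mul_nonneg (sub_nonneg.2 ha₁) (sub_nonneg.2 (not_le.1 hts).le),
      mul_nonneg (sub_nonneg.2 ha₁) (mul_nonneg (sub_nonneg.2 ha₁) hs)]

theorem le_wProfile (hs : 0 ≤ s) : t ≤ wProfile s t := by
  simpa using affine_le_wProfile (t := t) hs zero_le_one le_rfl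

theorem exists_wProfile_eq_affine (hs : 0 ≤ s) (ht : 0 ≤ t) :
    ∃ a ∈ Icc (0 : ℝ) 1, wProfile s t = a * t + (1 - a ^ 2) / 2 * s := by
  unfold wProfile
  split_ifs with hts
  · rcases hs.eq_or_lt with rfl | hs
    · exact ⟨0, by simp, by simp [le_antisymm hts ht]⟩
    · refine ⟨t / s, ⟨div_nonneg ht hs.le, div_le_one_of_le₀ hts hs.le⟩, ?_⟩
      field_simp
      ring
  · exact ⟨1, by simp, by simp⟩

end Profile

theorem convexOn_wProfile_norm_rpow {E F : Type*} [NormedAddCommGroup E] [NormedSpace ℝ E]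
    [NormedAddCommGroup F] [NormedSpace ℝ F] {γ : ℝ} (hγ : 1 ≤ γ) :
    ConvexOn ℝ univ (fun p : E × F => wProfile (‖p.1‖ ^ γ) ‖p.2‖) := by
  refine ConvexOn.of_le_of_exists_eq convex_univ
    (g := fun a : Icc (0 : ℝ) 1 => fun p : E × F => a * ‖p.2‖ + (1 - a ^ 2) / 2 * ‖p.1‖ ^ γ)
    (fun a => ?_) (fun a p _ => affine_le_wProfile (by positivity) a.2.1 a.2.2)
    (fun p _ => ?_)
  · have hc : (0 : ℝ) ≤ (1 - a ^ 2) / 2 := by nlinarith [a.2.1, a.2.2]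
    exact (((convexOn_univ_norm (E := F)).comp_linearMap (LinearMap.snd ℝ E F)).smul a.2.1).add
      (((convexOn_univ_norm_rpow (E := E) hγ).comp_linearMap (LinearMap.fst ℝ E F)).smul hc)
  · obtain ⟨a, ha, h⟩ :=
      exists_wProfile_eq_affine (Real.rpow_nonneg (norm_nonneg p.1) γ) (norm_nonneg p.2)
    exact ⟨⟨a, ha⟩, h⟩

theorem stmt_9 (n k : ℕ) (hkn : 2 * k < n)
    (γ : ℝ) (hγ : γ = 2 * ((n : ℝ) - k) / ((n : ℝ) - 2 * k))
    (w : EuclideanSpace ℝ (Fin (n - k)) × EuclideanSpace ℝ (Fin k) → ℝ)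
    (hw : ∀ p, ((γ / 2) ^ (1 - (k : ℝ) / n) * (γ - 1) ^ ((1 : ℝ) / n)) * w p =
      if ‖p.2‖ ≤ ‖p.1‖ ^ γ then (‖p.1‖ ^ γ + ‖p.1‖ ^ (-γ) * ‖p.2‖ ^ 2) / 2 else ‖p.2‖) :
    ConvexOn ℝ Set.univ w ∧ ∃ c > (0 : ℝ), ∀ p, c * ‖p.2‖ ≤ w p := by
  have hkn' : 2 * (k : ℝ) < n := by exact_mod_cast hkn
  have hγ₁ : 1 < γ := by
    rw [hγ, one_lt_div (by linarith)]
    linarith [(k.cast_nonneg : (0 : ℝ) ≤ k)]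
  set C := (γ / 2) ^ (1 - (k : ℝ) / n) * (γ - 1) ^ ((1 : ℝ) / n)
  have hC : 0 < C := mul_pos (by apply Real.rpow_pos_of_pos; linarith)
    (by apply Real.rpow_pos_of_pos; linarith)
  have hw' : ∀ p, w p = C⁻¹ * wProfile (‖p.1‖ ^ γ) ‖p.2‖ := fun p => by
    rw [wProfile, ← Real.rpow_neg (norm_nonneg _), ← hw p, inv_mul_cancel_left₀ hC.ne']
  refine ⟨((convexOn_wProfile_norm_rpow hγ₁.le).smul (inv_nonneg.2 hC.le)).congr
    fun p _ => (hw' p).symm, C⁻¹, inv_pos.2 hC, fun p => ?_⟩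
  rw [hw' p]
  exact mul_le_mul_of_nonneg_left (le_wProfile (by positivity)) (inv_nonneg.2 hC.le)
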